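/- Let d ≥ 1 be an integer, β > 0, and let f : (0,∞) → (0,∞) be non-decreasing and regularly varying at infinity of index β, i.e. f(x) = x^β L(x) where L is slowly varying, and assume L is non-decreasing or bounded away from zero and infinity on (0,∞). Let g : (0,∞) → ℝ be continuous with g(t) → ∞ as t → ∞. Then for every c > 0, lim_{t→∞} (Σ_{x ∈ ℤ^d} f(e^{g(t) − c|x|₁})) / f(e^{g(t)}) = C(c), where C(c) := Σ_{x ∈ ℤ^d} e^{−βc|x|₁} < ∞; moreover C(c) → 1 as c → ∞. -/

import Mathlib

open MeasureTheory ProbabilityTheory Filter Asymptotics Real Matrix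
open scoped BigOperators ENNReal

noncomputable section

/-- The centered lattice cube `Q_R = [-⌈R⌉,⌈R⌉]^d ∩ ℤ^d`. -/
def cube (d : ℕ) (R : ℝ) : Finset (Fin d → ℤ) :=
  Fintype.piFinset fun _ => Finset.Icc (-(⌈R⌉ : ℤ)) ⌈R⌉

/-- The ℓ¹-norm on `ℤ^d`. -/
def norm1 {d : ℕ} (x : Fin d → ℤ) : ℤ := ∑ i, |x i|

/-- Number of nearest neighbours of `x` inside the cube `Q_R`. -/
def degIn (d : ℕ) (R : ℝ) (x : Fin d → ℤ) : ℕ :=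
  ((cube d R).filter fun y => norm1 (x - y) = 1).card

/-- The Anderson Hamiltonian `κ Δ_R^* + ξ` on `ℓ²(Q_R)`, with free boundary
conditions if `free = true` and zero boundary conditions if `free = false`,
written as a matrix.  Off-diagonal entries are `κ` for nearest neighbours in
the cube; the diagonal entry at `x` is `ξ(x) - κ·deg(x)` where `deg(x)` is the
number of neighbours of `x` inside the cube (free b.c.) resp. `2d` (zero b.c.,
i.e. the function is extended by `0` outside the cube). -/
def ham (d : ℕ) (κ R : ℝ) (ξ : (Fin d → ℤ) → ℝ) (free : Bool) :
    Matrix (cube d R) (cube d R) ℝ :=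
  Matrix.of fun x y =>
    (if norm1 ((x : Fin d → ℤ) - (y : Fin d → ℤ)) = 1 then κ else 0) +
    (if x = y then ξ (x : Fin d → ℤ) -
      κ * (if free then (degIn d R (x : Fin d → ℤ) : ℝ) else (2 * d : ℝ)) else 0)

/-- `λ_1^{R,*}(ξ)`, the largest eigenvalue of the Anderson Hamiltonian. -/
def lam1 (d : ℕ) (κ R : ℝ) (ξ : (Fin d → ℤ) → ℝ) (free : Bool) : ℝ :=
  sSup (spectrum ℝ (ham d κ R ξ free))

/-- `ξ^{(1)}_R`, the maximum of the potential over the cube `Q_R`. -/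
def xiMax (d : ℕ) (R : ℝ) (ξ : (Fin d → ℤ) → ℝ) : ℝ :=
  sSup (ξ '' (cube d R : Set (Fin d → ℤ)))

/-- `ξ̂_R`, the maximum of the potential over the punctured cube `Q_R \ {0}`. -/
def xiHat (d : ℕ) (R : ℝ) (ξ : (Fin d → ℤ) → ℝ) : ℝ :=
  sSup (ξ '' ((cube d R : Set (Fin d → ℤ)) \ {0}))

/-- `ξ^{(2)}_R`, the second largest value of the potential on the cube `Q_R`
(as the maximum over distinct pairs of sites of the minimum of the two values). -/
def xiSecond (d : ℕ) (R : ℝ) (ξ : (Fin d → ℤ) → ℝ) : ℝ :=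
  sSup ((fun p => min (ξ p.1) (ξ p.2)) ''
    ((cube d R).offDiag : Set ((Fin d → ℤ) × (Fin d → ℤ))))

/-- The box solution `u_R^*(t,·) = exp(t H_R^*) 𝟙` of the parabolic Anderson
problem on `Q_R` with initial condition `𝟙` (free b.c. if `free = true`,
zero b.c. if `free = false`), extended by `0` outside the cube. -/
def boxSol (d : ℕ) (κ : ℝ) (ξ : (Fin d → ℤ) → ℝ) (free : Bool) (R t : ℝ)
    (x : Fin d → ℤ) : ℝ :=
  if hx : x ∈ cube d R then
    ((NormedSpace.exp (t • ham d κ R ξ free)) *ᵥ (fun _ => 1)) ⟨x, hx⟩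
  else 0

/-- The Feynman–Kac solution of the PAM with homogeneous initial condition
`u_0 ≡ 1`: the increasing limit of the zero-boundary box solutions. -/
def pamSol (d : ℕ) (κ : ℝ) (ξ : (Fin d → ℤ) → ℝ) (t : ℝ) (x : Fin d → ℤ) : ℝ :=
  ⨆ n : ℕ, boxSol d κ ξ false (n + 1) t x

/-- The cumulant generating function `H(t) = log⟨exp(t ξ(0))⟩`. -/
def cgfH {Ω : Type*} [MeasurableSpace Ω] (P : Measure Ω)
    {d : ℕ} (ξ : Ω → (Fin d → ℤ) → ℝ) (t : ℝ) : ℝ :=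
  Real.log (∫ ω, Real.exp (t * ξ ω 0) ∂P)

/-- The tail of the potential: `F̄(h) = P(ξ(0) > h)`. -/
def tailP {Ω : Type*} [MeasurableSpace Ω] (P : Measure Ω)
    {d : ℕ} (ξ : Ω → (Fin d → ℤ) → ℝ) (h : ℝ) : ℝ :=
  (P {ω | h < ξ ω 0}).toReal

/-- Conditional probability `P(A|B) = P(A ∩ B)/P(B)`, as a real number. -/
def cPr {Ω : Type*} [MeasurableSpace Ω] (P : Measure Ω) (A B : Set Ω) : ℝ :=
  (P (A ∩ B)).toReal / (P B).toReal

/-- Conditional expectation `⟨X | B⟩ = ⟨X 1_B⟩ / P(B)`, as a real number. -/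
def cEx {Ω : Type*} [MeasurableSpace Ω] (P : Measure Ω) (X : Ω → ℝ) (B : Set Ω) : ℝ :=
  (∫ ω in B, X ω ∂P) / (P B).toReal

/-- A positive function is slowly varying at infinity. -/
def SlowlyVarying (L : ℝ → ℝ) : Prop :=
  ∀ lam : ℝ, 0 < lam → Tendsto (fun x => L (lam * x) / L x) atTop (nhds 1)

/-- The class `𝓕` of `C¹` functions `f` with `f(0) = 0`, `f' > 0` on `(0,∞)`,
which are regularly varying of some positive index `β`, `f(x) = x^β L(x)`,
with slowly varying part `L` non-decreasing or bounded away from `0` and `∞`. -/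
def MemF (f : ℝ → ℝ) : Prop :=
  ContDiff ℝ 1 f ∧ f 0 = 0 ∧ (∀ x > (0:ℝ), 0 < deriv f x) ∧
  ∃ β > (0:ℝ), ∃ L : ℝ → ℝ, SlowlyVarying L ∧
    (∀ x > (0:ℝ), f x = x ^ β * L x) ∧
    (MonotoneOn L (Set.Ioi 0) ∨ ∃ m M : ℝ, 0 < m ∧ ∀ x > (0:ℝ), m ≤ L x ∧ L x ≤ M)

/-- The class `𝒯` of `C¹` time-scale functions: `t(0) = 0`, `t' > 0` on
`(0,∞)` and `t(x) → ∞`. -/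
def MemT (τ : ℝ → ℝ) : Prop :=
  ContDiff ℝ 1 τ ∧ τ 0 = 0 ∧ (∀ x > (0:ℝ), 0 < deriv τ x) ∧ Tendsto τ atTop atTop

/-- The growth condition (1.3): for all `a ≥ 0`,
`max_j e^{t_j(t) a} = o(min_i ⟨f_i(e^{t_i(t) ξ(0)})⟩)` as `t → ∞`
(stated pairwise, which is equivalent for finitely many indices). -/
def GrowthCond {Ω : Type*} [MeasurableSpace Ω] (P : Measure Ω) {d : ℕ}
    (ξ : Ω → (Fin d → ℤ) → ℝ) {p : ℕ} (f τ : Fin p → ℝ → ℝ) : Prop :=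
  ∀ a ≥ (0:ℝ), ∀ j i : Fin p,
    (fun t => Real.exp (τ j t * a)) =o[atTop]
      (fun t => ∫ ω, f i (Real.exp (τ i t * ξ ω 0)) ∂P)

/-- `R_t = t·(log t)²`. -/
def Rt (t : ℝ) : ℝ := t * (Real.log t) ^ 2

/-- A positive function `g` with `g(t) = o(t)` is self-neglecting if
`g(t + a g(t)) ~ g(t)` as `t → ∞`, locally uniformly in `a ∈ (0,∞)`. -/
def SelfNeglecting (g : ℝ → ℝ) : Prop :=
  g =o[atTop] (fun t => t) ∧
  ∀ K : Set ℝ, IsCompact K → K ⊆ Set.Ioi 0 →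
    TendstoUniformlyOn (fun t a => g (t + a * g t) / g t) (fun _ => 1) atTop K

/-- Pearson correlation coefficient of two random variables. -/
def pearson {Ω : Type*} [MeasurableSpace Ω] (P : Measure Ω) (X Y : Ω → ℝ) : ℝ :=
  (∫ ω, (X ω - ∫ x, X x ∂P) * (Y ω - ∫ x, Y x ∂P) ∂P) /
    Real.sqrt ((∫ ω, (X ω - ∫ x, X x ∂P) ^ 2 ∂P) * (∫ ω, (Y ω - ∫ x, Y x ∂P) ^ 2 ∂P))

/-! With `y = e^{g t}` and `l_x = e^{-c|x|₁} ≤ 1`, each summand of the ratio is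
`f (l_x y) / f y = l_x^β · L (l_x y) / L y`. Slow variation gives termwise convergence to
`l_x^β`, and monotonicity or two-sided bounds of `L` bound `L (l y) / L y` uniformly for
`l ≤ 1`, so dominated convergence applies. The same dominated convergence, in which only the
term `x = 0` survives, gives `C(c) → 1`. -/

lemma norm1_nonneg {d : ℕ} (x : Fin d → ℤ) : 0 ≤ norm1 x :=
  Finset.sum_nonneg fun _ _ => abs_nonneg _

lemma one_le_norm1 {d : ℕ} {x : Fin d → ℤ} (hx : x ≠ 0) : 1 ≤ norm1 x := by
  obtain ⟨i, hi⟩ : ∃ i, x i ≠ 0 := Function.ne_iff.mp hx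
  calc (1 : ℤ) ≤ |x i| := Int.one_le_abs hi
    _ ≤ norm1 x := Finset.single_le_sum (f := fun j => |x j|)
        (fun j _ => abs_nonneg _) (Finset.mem_univ i)

lemma norm1_cons {d : ℕ} (k : ℤ) (x : Fin d → ℤ) :
    norm1 (Fin.cons k x : Fin (d + 1) → ℤ) = |k| + norm1 x := by
  simp [norm1, Fin.sum_univ_succ]

lemma summable_exp_neg_mul_abs {a : ℝ} (ha : 0 < a) :
    Summable (fun k : ℤ => Real.exp (-(a * (|k| : ℝ)))) := by
  have hnat : Summable (fun n : ℕ => Real.exp (-(a * (n : ℝ)))) := by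
    refine (summable_geometric_of_lt_one (Real.exp_pos (-a)).le
      (Real.exp_lt_one_iff.mpr (neg_neg_of_pos ha))).congr fun n => ?_
    rw [← Real.exp_nat_mul]; ring_nf
  exact .of_nat_of_neg (hnat.congr fun n => by simp) (hnat.congr fun n => by simp)

lemma summable_exp_neg_mul_norm1 (d : ℕ) {a : ℝ} (ha : 0 < a) :
    Summable (fun x : Fin d → ℤ => Real.exp (-(a * (norm1 x : ℝ)))) := by
  induction d with
  | zero => exact Summable.of_finite
  | succ n ih =>
    have hprod := (summable_exp_neg_mul_abs ha).mul_of_nonneg ih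
      (fun _ => (Real.exp_pos _).le) (fun _ => (Real.exp_pos _).le)
    refine (Fin.consEquiv fun _ => ℤ).summable_iff.mp (hprod.congr fun p => ?_)
    show _ = Real.exp (-(a * (norm1 (Fin.cons p.1 p.2 : Fin (n + 1) → ℤ) : ℝ)))
    rw [norm1_cons, ← Real.exp_add]
    push_cast
    ring_nf

lemma tendsto_tsum_exp_neg_mul_norm1_atTop (d : ℕ) :
    Tendsto (fun a : ℝ => ∑' x : Fin d → ℤ, Real.exp (-(a * (norm1 x : ℝ)))) atTop (nhds 1) := by
  have hlim : ∀ x : Fin d → ℤ, Tendsto (fun a : ℝ => Real.exp (-(a * (norm1 x : ℝ)))) atTop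
      (nhds (if x = 0 then 1 else 0)) := by
    intro x
    split_ifs with hx
    · simp [hx, norm1]
    · have hn : (0 : ℝ) < norm1 x := by exact_mod_cast one_le_norm1 hx
      exact Real.tendsto_exp_atBot.comp
        (tendsto_neg_atTop_atBot.comp (tendsto_id.atTop_mul_const hn))
  have hbound : ∀ᶠ a : ℝ in atTop, ∀ x : Fin d → ℤ,
      ‖Real.exp (-(a * (norm1 x : ℝ)))‖ ≤ Real.exp (-(1 * (norm1 x : ℝ))) := by
    filter_upwards [eventually_ge_atTop 1] with a ha x
    have hn : (0 : ℝ) ≤ norm1 x := by exact_mod_cast norm1_nonneg x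
    rw [Real.norm_of_nonneg (Real.exp_pos _).le, Real.exp_le_exp]
    exact neg_le_neg (mul_le_mul_of_nonneg_right ha hn)
  simpa using tendsto_tsum_of_dominated_convergence
    (summable_exp_neg_mul_norm1 d one_pos) hlim hbound

section RegularVariation

variable {f L : ℝ → ℝ} {β : ℝ}

lemma pos_of_eq_rpow_mul (hfpos : ∀ x > (0 : ℝ), 0 < f x)
    (hfL : ∀ x > (0 : ℝ), f x = x ^ β * L x) {x : ℝ} (hx : 0 < x) : 0 < L x := by
  have h := hfpos x hx
  rw [hfL x hx] at h
  exact pos_of_mul_pos_right h (Real.rpow_pos_of_pos hx β).le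

lemma div_eq_rpow_mul_div (hfL : ∀ x > (0 : ℝ), f x = x ^ β * L x)
    {l y : ℝ} (hl : 0 < l) (hy : 0 < y) :
    f (l * y) / f y = l ^ β * (L (l * y) / L y) := by
  rw [hfL _ (mul_pos hl hy), hfL y hy, Real.mul_rpow hl.le hy.le, mul_assoc, mul_div_assoc,
    mul_div_mul_left _ _ (Real.rpow_pos_of_pos hy β).ne']

lemma exists_div_le_of_monotoneOn_or_bounded (hLpos : ∀ x > (0 : ℝ), 0 < L x)
    (hLreg : MonotoneOn L (Set.Ioi 0) ∨ ∃ m M : ℝ, 0 < m ∧ ∀ x > (0 : ℝ), m ≤ L x ∧ L x ≤ M) :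
    ∃ K : ℝ, ∀ y > (0 : ℝ), ∀ l ∈ Set.Ioc (0 : ℝ) 1, L (l * y) / L y ≤ K := by
  rcases hLreg with hmon | ⟨m, M, hm, hb⟩
  · refine ⟨1, fun y hy l hl => (div_le_one (hLpos y hy)).mpr ?_⟩
    exact hmon (mul_pos hl.1 hy) hy (mul_le_of_le_one_left hy.le hl.2)
  · refine ⟨M / m, fun y hy l hl => ?_⟩
    exact div_le_div₀ ((hLpos y hy).le.trans (hb y hy).2) (hb _ (mul_pos hl.1 hy)).2 hm
      (hb y hy).1

lemma tendsto_tsum_div_of_regularlyVarying {ι : Type*} (hL : SlowlyVarying L)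
    (hLpos : ∀ x > (0 : ℝ), 0 < L x) (hfL : ∀ x > (0 : ℝ), f x = x ^ β * L x)
    {K : ℝ} (hK : ∀ y > (0 : ℝ), ∀ l ∈ Set.Ioc (0 : ℝ) 1, L (l * y) / L y ≤ K)
    {l : ι → ℝ} (hl : ∀ i, l i ∈ Set.Ioc (0 : ℝ) 1) (hsum : Summable fun i => l i ^ β) :
    Tendsto (fun y => ∑' i, f (l i * y) / f y) atTop (nhds (∑' i, l i ^ β)) := by
  refine tendsto_tsum_of_dominated_convergence (hsum.mul_right K) (fun i => ?_) ?_
  · have h := ((hL (l i) (hl i).1).const_mul (l i ^ β)).congr'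
      ((eventually_gt_atTop 0).mono fun y hy => (div_eq_rpow_mul_div hfL (hl i).1 hy).symm)
    rwa [mul_one] at h
  · filter_upwards [eventually_gt_atTop 0] with y hy i
    have hpow : 0 ≤ l i ^ β := Real.rpow_nonneg (hl i).1.le β
    have hratio : 0 ≤ L (l i * y) / L y :=
      div_nonneg (hLpos _ (mul_pos (hl i).1 hy)).le (hLpos y hy).le
    rw [div_eq_rpow_mul_div hfL (hl i).1 hy, Real.norm_of_nonneg (mul_nonneg hpow hratio)]
    exact mul_le_mul_of_nonneg_left (hK y hy (l i) (hl i)) hpow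

end RegularVariation

theorem stmt5_general (d : ℕ) (β : ℝ) (hβ : 0 < β)
    (f : ℝ → ℝ) (hfpos : ∀ x > (0:ℝ), 0 < f x)
    (L : ℝ → ℝ) (hL : SlowlyVarying L) (hfL : ∀ x > (0:ℝ), f x = x ^ β * L x)
    (hLreg : MonotoneOn L (Set.Ioi 0) ∨ ∃ m M : ℝ, 0 < m ∧ ∀ x > (0:ℝ), m ≤ L x ∧ L x ≤ M)
    (g : ℝ → ℝ) (hgt : Tendsto g atTop atTop)
    (c : ℝ) (hc : 0 < c) :
    Summable (fun x : Fin d → ℤ => Real.exp (-(β * c * (norm1 x : ℝ)))) ∧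
    Tendsto (fun t =>
        (∑' x : Fin d → ℤ, f (Real.exp (g t - c * (norm1 x : ℝ)))) / f (Real.exp (g t)))
      atTop (nhds (∑' x : Fin d → ℤ, Real.exp (-(β * c * (norm1 x : ℝ))))) ∧
    Tendsto (fun c' : ℝ => ∑' x : Fin d → ℤ, Real.exp (-(β * c' * (norm1 x : ℝ))))
      atTop (nhds 1) := by
  have hLpos : ∀ x > (0 : ℝ), 0 < L x := fun x hx => pos_of_eq_rpow_mul hfpos hfL hx
  obtain ⟨K, hK⟩ := exists_div_le_of_monotoneOn_or_bounded hLpos hLreg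
  have hsum := summable_exp_neg_mul_norm1 d (mul_pos hβ hc)
  refine ⟨hsum, ?_, (tendsto_tsum_exp_neg_mul_norm1_atTop d).comp
    (tendsto_id.const_mul_atTop hβ)⟩
  have hl : ∀ x : Fin d → ℤ, Real.exp (-(c * (norm1 x : ℝ))) ∈ Set.Ioc (0 : ℝ) 1 := fun x =>
    ⟨Real.exp_pos _, Real.exp_le_one_iff.mpr
      (neg_nonpos.mpr (mul_nonneg hc.le (by exact_mod_cast norm1_nonneg x)))⟩
  have hpow : ∀ x : Fin d → ℤ,
      Real.exp (-(c * (norm1 x : ℝ))) ^ β = Real.exp (-(β * c * (norm1 x : ℝ))) := fun x => by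
    rw [← Real.exp_mul]; ring_nf
  simp only [← hpow] at hsum ⊢
  refine ((tendsto_tsum_div_of_regularlyVarying hL hLpos hfL hK hl hsum).comp
    (Real.tendsto_exp_atTop.comp hgt)).congr fun t => ?_
  simp only [Function.comp_apply, tsum_div_const, ← Real.exp_add, neg_add_eq_sub]

/-- For a non-decreasing regularly varying function `f` of
index `β > 0` (with slowly varying part non-decreasing or bounded away from
`0` and `∞`) and `g` continuous with `g(t) → ∞`, for every `c > 0`:
`Σ_{x ∈ ℤ^d} f(e^{g(t) − c|x|₁}) / f(e^{g(t)}) → C(c) = Σ_x e^{−βc|x|₁} < ∞`,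
and `C(c) → 1` as `c → ∞`. -/
theorem stmt5 (d : ℕ) (hd : 1 ≤ d) (β : ℝ) (hβ : 0 < β)
    (f : ℝ → ℝ) (hmono : MonotoneOn f (Set.Ioi 0)) (hfpos : ∀ x > (0:ℝ), 0 < f x)
    (L : ℝ → ℝ) (hL : SlowlyVarying L) (hfL : ∀ x > (0:ℝ), f x = x ^ β * L x)
    (hLreg : MonotoneOn L (Set.Ioi 0) ∨ ∃ m M : ℝ, 0 < m ∧ ∀ x > (0:ℝ), m ≤ L x ∧ L x ≤ M)
    (g : ℝ → ℝ) (hg : Continuous g) (hgt : Tendsto g atTop atTop)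
    (c : ℝ) (hc : 0 < c) :
    Summable (fun x : Fin d → ℤ => Real.exp (-(β * c * (norm1 x : ℝ)))) ∧
    Tendsto (fun t =>
        (∑' x : Fin d → ℤ, f (Real.exp (g t - c * (norm1 x : ℝ)))) / f (Real.exp (g t)))
      atTop (nhds (∑' x : Fin d → ℤ, Real.exp (-(β * c * (norm1 x : ℝ))))) ∧
    Tendsto (fun c' : ℝ => ∑' x : Fin d → ℤ, Real.exp (-(β * c' * (norm1 x : ℝ))))
      atTop (nhds 1) :=
  stmt5_general d β hβ f hfpos L hL hfL hLreg g hgt c hc
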